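/- Let Π = (δ, Σ, 𝒞) be an LCL problem for δ-regular rooted trees. Then there exists a positive integer γ with the following property: for every subset Σ̃ ⊆ Σ and every label σ ∈ Σ̃ \ trim(Σ̃), there is no correct labeling of T_γ whose root has label σ and all of whose labels lie in Σ̃. -/

import Mathlib

/-!
The sets `A i = {σ | rOk C S i σ}` form a decreasing chain, and `A (i + 2)` is determined by
`A (i + 1)` exactly as `A (i + 1)` is by `A i`. Hence once the chain stalls it is constant from
then on, and a strictly decreasing chain of subsets of `L` has at most `|L|` steps. So a label
that survives to height `|L| + 1` survives to every height, and `γ = |L| + 1` works uniformly in `S`.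
-/

/-- `rOk 𝒞 S i σ`: there is a correct labeling of the complete rooted tree `T_i`
whose root has label `σ` and all of whose labels lie in `S` (every node with
children must use a node configuration from `𝒞`). -/
def rOk {L : Type} (C : Set (L × Multiset L)) (S : Set L) : ℕ → L → Prop
  | 0, σ => σ ∈ S
  | i + 1, σ => σ ∈ S ∧ ∃ m : Multiset L, (σ, m) ∈ C ∧ ∀ a ∈ m, rOk C S i a

/-- `trim(Σ̃)` for rooted trees: labels `σ ∈ S` such that for every `i ≥ 1` there is
a correct labeling of `T_i` with root label `σ` and all labels in `S`. -/
def trimR {L : Type} (C : Set (L × Multiset L)) (S : Set L) : Set L :=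
  {σ | σ ∈ S ∧ ∀ i : ℕ, 1 ≤ i → rOk C S i σ}

theorem Antitone.exists_le_card_succ_eq {α : Type*} [Finite α] {A : ℕ → Set α}
    (hA : Antitone A) : ∃ k ≤ Nat.card α, A (k + 1) = A k := by
  by_contra! hne
  have hlt : ∀ k ≤ Nat.card α, (A (k + 1)).ncard < (A k).ncard := fun k hk =>
    Set.ncard_lt_ncard ((hA k.le_succ).lt_of_ne (hne k hk))
  have hdrop : ∀ k ≤ Nat.card α + 1, (A k).ncard + k ≤ (A 0).ncard := by
    intro k hk
    induction k with
    | zero => simp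
    | succ k ih =>
      have hstep := hlt k (by omega)
      have hprev := ih (by omega)
      omega
  have hlast := hdrop (Nat.card α + 1) le_rfl
  have hfirst := Set.ncard_le_card (A 0)
  omega

namespace rOk

variable {L : Type} {C : Set (L × Multiset L)} {S : Set L}

theorem of_succ : ∀ {i : ℕ} {σ : L}, rOk C S (i + 1) σ → rOk C S i σ
  | 0, _, h => h.1
  | _ + 1, _, ⟨hσ, m, hm, ha⟩ => ⟨hσ, m, hm, fun a am => of_succ (ha a am)⟩

theorem antitone : Antitone fun i => {σ | rOk C S i σ} :=
  antitone_nat_of_succ_le fun _ _ => of_succ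

theorem setOf_succ_succ_eq {k : ℕ} (h : {σ | rOk C S (k + 1) σ} = {σ | rOk C S k σ}) :
    {σ | rOk C S (k + 2) σ} = {σ | rOk C S (k + 1) σ} := by
  have hk : ∀ a, rOk C S (k + 1) a ↔ rOk C S k a := Set.ext_iff.mp h
  ext σ
  rw [Set.mem_ofPred_eq, Set.mem_ofPred_eq, rOk.eq_2, rOk.eq_2]
  simp only [hk]

theorem setOf_succ_eq_of_le {k : ℕ} (h : {σ | rOk C S (k + 1) σ} = {σ | rOk C S k σ}) {n : ℕ}
    (hkn : k ≤ n) : {σ | rOk C S (n + 1) σ} = {σ | rOk C S n σ} := by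
  induction n, hkn using Nat.le_induction with
  | base => exact h
  | succ n _ ih => exact setOf_succ_succ_eq ih

theorem setOf_eq_of_le {k : ℕ} (h : {σ | rOk C S (k + 1) σ} = {σ | rOk C S k σ}) {n : ℕ}
    (hkn : k ≤ n) : {σ | rOk C S n σ} = {σ | rOk C S k σ} := by
  induction n, hkn using Nat.le_induction with
  | base => rfl
  | succ n hkn ih => exact (setOf_succ_eq_of_le h hkn).trans ih

theorem of_card_succ [Finite L] {σ : L} (hσ : rOk C S (Nat.card L + 1) σ) (i : ℕ) :
    rOk C S i σ := by
  obtain ⟨k, hk, hstall⟩ := (antitone (C := C) (S := S)).exists_le_card_succ_eq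
  have hγ : {σ | rOk C S (Nat.card L + 1) σ} = {σ | rOk C S k σ} :=
    setOf_eq_of_le hstall (by omega)
  have hmax : {σ | rOk C S (max i k) σ} = {σ | rOk C S k σ} :=
    setOf_eq_of_le hstall (le_max_right i k)
  have hσ' : σ ∈ {σ | rOk C S (max i k) σ} := hmax ▸ hγ ▸ hσ
  exact antitone (le_max_left i k) hσ'

end rOk

theorem stmt11_general {L : Type} [Fintype L]
    (C : Set (L × Multiset L)) :
    ∃ γ : ℕ, 1 ≤ γ ∧ ∀ St : Set L, ∀ σ ∈ St, σ ∉ trimR C St → ¬ rOk C St γ σ :=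
  ⟨Nat.card L + 1, Nat.le_add_left 1 _, fun _ _ hσ htrim hok =>
    htrim ⟨hσ, fun i _ => rOk.of_card_succ hok i⟩⟩

/-- A uniform witness height `γ` for non-membership in `trim`,
rooted trees. -/
theorem stmt11 {L : Type} [Fintype L] [DecidableEq L]
    (δ : ℕ) (hδ : 1 ≤ δ) (C : Set (L × Multiset L))
    (hC : ∀ c ∈ C, Multiset.card c.2 = δ) :
    ∃ γ : ℕ, 1 ≤ γ ∧ ∀ St : Set L, ∀ σ ∈ St, σ ∉ trimR C St → ¬ rOk C St γ σ :=
  stmt11_general C
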